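/- If an even multigraph H (all degrees even) with connected color class H(j) is detached at one vertex y by splitting off a new vertex taking exactly d_{H(j)}(y)/η(y) (an even integer) of y's color-j edge-endpoints, chosen so that from each component of H(j)∖{y} at most half of the color-j edges joining y to that component are moved to the new vertex, then the resulting color class remains connected. -/

import Mathlib

/-- Degree of `v` (loops count twice). -/
noncomputable def dDeg {V E : Type} (ends : E → V × V) (v : V) : ℕ :=
  Nat.card {e : E // (ends e).1 = v} + Nat.card {e : E // (ends e).2 = v}

/-- Two vertices are joined by some edge. -/
def dAdj {V E : Type} (ends : E → V × V) (a b : V) : Prop :=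
  ∃ e : E, ends e = (a, b) ∨ ends e = (b, a)

/-- `u` and `v` lie in the same component of the graph with the vertex `y` deleted. -/
def dReachAvoid {V E : Type} (ends : E → V × V) (y u v : V) : Prop :=
  Relation.ReflTransGen (fun a b => a ≠ y ∧ b ≠ y ∧ dAdj ends a b) u v

/-- `e` joins `y` to the component of `v` in the graph with `y` deleted. -/
def dJoinsComp {V E : Type} (ends : E → V × V) (y : V) (e : E) (v : V) : Prop :=
  ∃ u : V, u ≠ y ∧ (ends e = (y, u) ∨ ends e = (u, y)) ∧ dReachAvoid ends y u v

/-!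
Edges avoiding `y` are untouched by the detachment, so paths in `H - y` survive, and every
old vertex still reaches `y` or the new vertex. The new vertex receives an edge from some `b`.
If `b ≠ y`, at most half of the edges joining `y` to the component of `b` in `H - y` were
moved, so one of them still ends at `y`; through it and that component the new vertex
reaches `y`.
-/

open Relation

instance {V E : Type} (ends : E → V × V) : Std.Symm (dAdj ends) where
  symm _ _ := fun ⟨e, he⟩ => ⟨e, he.symm⟩

theorem exists_and_not_of_two_mul_card_le {α : Type} [Finite α] {p q : α → Prop}
    (h : 2 * Nat.card {a // p a ∧ q a} ≤ Nat.card {a // p a}) (hp : ∃ a, p a) :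
    ∃ a, p a ∧ ¬q a := by
  by_contra! hpq
  have hcard : Nat.card {a // p a ∧ q a} = Nat.card {a // p a} :=
    Nat.card_congr (Equiv.subtypeEquivRight fun a => ⟨And.left, fun ha => ⟨ha, hpq a ha⟩⟩)
  have hpos : 0 < Nat.card {a // p a} := by
    obtain ⟨a, ha⟩ := hp
    have : Nonempty {a // p a} := ⟨⟨a, ha⟩⟩
    exact Nat.card_pos
  omega

section Detachment

variable {V E : Type} {ends : E → V × V} {y : V} {ends' : E → Option V × Option V}

/-- The new vertex is `none`; sending it back to `y` recovers `ends`. -/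
def IsDetachment (ends : E → V × V) (y : V) (ends' : E → Option V × Option V) : Prop :=
  ∀ e, ((ends' e).1.getD y, (ends' e).2.getD y) = ends e

def IsMoved (ends' : E → Option V × Option V) (e : E) : Prop :=
  (ends' e).1 = none ∨ (ends' e).2 = none

namespace IsDetachment

theorem fst (hd : IsDetachment ends y ends') (e : E) :
    (ends' e).1 = some (ends e).1 ∨ (ends' e).1 = none ∧ y = (ends e).1 :=
  Option.getD_eq_iff.1 (congrArg Prod.fst (hd e))

theorem snd (hd : IsDetachment ends y ends') (e : E) :
    (ends' e).2 = some (ends e).2 ∨ (ends' e).2 = none ∧ y = (ends e).2 :=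
  Option.getD_eq_iff.1 (congrArg Prod.snd (hd e))

theorem eq_of_not_isMoved (hd : IsDetachment ends y ends') {e : E} (he : ¬IsMoved ends' e) :
    ends' e = (some (ends e).1, some (ends e).2) := by
  rw [IsMoved, not_or] at he
  exact Prod.ext ((hd.fst e).resolve_right fun h => he.1 h.1)
    ((hd.snd e).resolve_right fun h => he.2 h.1)

theorem dAdj_of_ne (hd : IsDetachment ends y ends') {a c : V} (h : dAdj ends a c)
    (ha : a ≠ y) : dAdj ends' (some a) (some c) ∨ c = y ∧ dAdj ends' (some a) none := by
  obtain ⟨e, he | he⟩ := h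
  · have h1 := hd.fst e
    rcases hd.snd e with h2 | h2 <;> simp only [he] at h1 h2
    · exact Or.inl ⟨e, Or.inl (Prod.ext (h1.resolve_right (ha ·.2.symm)) h2)⟩
    · exact Or.inr ⟨h2.2.symm, e, Or.inl (Prod.ext (h1.resolve_right (ha ·.2.symm)) h2.1)⟩
  · have h2 := hd.snd e
    rcases hd.fst e with h1 | h1 <;> simp only [he] at h1 h2
    · exact Or.inl ⟨e, Or.inr (Prod.ext h1 (h2.resolve_right (ha ·.2.symm)))⟩
    · exact Or.inr ⟨h1.2.symm, e, Or.inr (Prod.ext h1.1 (h2.resolve_right (ha ·.2.symm)))⟩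

theorem reflTransGen_of_dReachAvoid (hd : IsDetachment ends y ends') {u v : V}
    (h : dReachAvoid ends y u v) : ReflTransGen (dAdj ends') (some u) (some v) := by
  induction h with
  | refl => rfl
  | tail _ hbc ih =>
    obtain ⟨hb, hc, hadj⟩ := hbc
    exact ih.tail ((hd.dAdj_of_ne hadj hb).resolve_right fun h => hc h.1)

theorem reflTransGen_of_dJoinsComp (hd : IsDetachment ends y ends') {e : E} {b : V}
    (hjoin : dJoinsComp ends y e b) (he : ¬IsMoved ends' e) :
    ReflTransGen (dAdj ends') (some b) (some y) := by
  obtain ⟨u, -, hends, hreach⟩ := hjoin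
  have huy : dAdj ends' (some u) (some y) := by
    refine ⟨e, ?_⟩
    rw [hd.eq_of_not_isMoved he]
    rcases hends with h | h <;> simp [h]
  exact (symm (hd.reflTransGen_of_dReachAvoid hreach)).tail huy

theorem exists_dAdj_none (hd : IsDetachment ends y ends')
    (hone : ∀ e : E, ¬((ends' e).1 = none ∧ (ends' e).2 = none))
    (hpos : 0 < Nat.card {e : E // (ends' e).1 = none} + Nat.card {e : E // (ends' e).2 = none}) :
    ∃ e b, dAdj ends' none (some b) ∧ (ends e = (y, b) ∨ ends e = (b, y)) := by
  obtain ⟨e, he⟩ : ∃ e, IsMoved ends' e := by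
    by_contra! h
    simp [not_or.1 (h _)] at hpos
  refine ⟨e, ?_⟩
  rcases hd.fst e with h1 | h1 <;> rcases hd.snd e with h2 | h2
  · simp [IsMoved, h1, h2] at he
  · exact ⟨(ends e).1, ⟨e, Or.inr (Prod.ext h1 h2.1)⟩, Or.inr (Prod.ext rfl h2.2.symm)⟩
  · exact ⟨(ends e).2, ⟨e, Or.inl (Prod.ext h1.1 h2)⟩, Or.inl (Prod.ext h1.2.symm rfl)⟩
  · exact absurd ⟨h1.1, h2.1⟩ (hone e)

theorem reflTransGen_none_some [Finite E] (hd : IsDetachment ends y ends')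
    (hone : ∀ e : E, ¬((ends' e).1 = none ∧ (ends' e).2 = none))
    (hpos : 0 < Nat.card {e : E // (ends' e).1 = none} + Nat.card {e : E // (ends' e).2 = none})
    (hhalf : ∀ v : V, v ≠ y →
      2 * Nat.card {e : E // dJoinsComp ends y e v ∧ IsMoved ends' e} ≤
        Nat.card {e : E // dJoinsComp ends y e v}) :
    ReflTransGen (dAdj ends') none (some y) := by
  obtain ⟨e, b, hadj, hends⟩ := hd.exists_dAdj_none hone hpos
  by_cases hb : b = y
  · exact .single (hb ▸ hadj)
  obtain ⟨e', hjoin, hkept⟩ :=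
    exists_and_not_of_two_mul_card_le (hhalf b hb) ⟨e, b, hb, hends, .refl⟩
  exact .head hadj (hd.reflTransGen_of_dJoinsComp hjoin hkept)

theorem reflTransGen_some_some (hd : IsDetachment ends y ends')
    (hnone : ReflTransGen (dAdj ends') none (some y)) {v : V}
    (hv : ReflTransGen (dAdj ends) v y) :
    ReflTransGen (dAdj ends') (some v) (some y) := by
  induction hv using ReflTransGen.head_induction_on with
  | refl => rfl
  | @head a c hac _ ih =>
    by_cases ha : a = y
    · rw [ha]
    rcases hd.dAdj_of_ne hac ha with h | ⟨-, h⟩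
    exacts [ih.head h, hnone.head h]

end IsDetachment

end Detachment

theorem detach_vertex_stays_connected_general {V E : Type} [Fintype E]
    (ends : E → V × V) (y : V)
    (hconn : ∀ u v : V, Relation.ReflTransGen (dAdj ends) u v)
    (ends' : E → Option V × Option V)
    (hproj : ∀ e : E, ((ends' e).1.getD y, (ends' e).2.getD y) = ends e)
    (hone : ∀ e : E, ¬((ends' e).1 = none ∧ (ends' e).2 = none))
    (hposMoved : 0 < Nat.card {e : E // (ends' e).1 = none} +
        Nat.card {e : E // (ends' e).2 = none})
    (hhalf : ∀ v : V, v ≠ y →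
      2 * Nat.card {e : E // dJoinsComp ends y e v ∧
          ((ends' e).1 = none ∨ (ends' e).2 = none)} ≤
        Nat.card {e : E // dJoinsComp ends y e v}) :
    ∀ x z : Option V, Relation.ReflTransGen (dAdj ends') x z := by
  have hd : IsDetachment ends y ends' := hproj
  have hnone := hd.reflTransGen_none_some hone hposMoved hhalf
  have hy : ∀ x : Option V, ReflTransGen (dAdj ends') x (some y) := fun
    | none => hnone
    | some v => hd.reflTransGen_some_some hnone (hconn v y)
  exact fun x z => (hy x).trans (symm (hy z))

/-- Step (D2): let the (color class of the) finite multigraph `(V, E, ends)` be even and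
connected, and detach a new vertex `none : Option V` from `y`: `ends'` re-ends every
edge, replacing some occurrences of the endpoint `y` by the new vertex (at most one per
edge), so that the new vertex receives exactly `d(y)/η` edge-endpoints, an even positive
number, and so that from each component of the graph minus `y` at most half of the edges
joining `y` to that component are moved.  Then the resulting graph is still connected. -/
theorem detach_vertex_stays_connected {V E : Type} [Fintype V] [Fintype E]
    (ends : E → V × V) (y : V)
    (heven : ∀ v : V, Even (dDeg ends v))
    (hconn : ∀ u v : V, Relation.ReflTransGen (dAdj ends) u v)
    (ends' : E → Option V × Option V)
    (hproj : ∀ e : E, ((ends' e).1.getD y, (ends' e).2.getD y) = ends e)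
    (hone : ∀ e : E, ¬((ends' e).1 = none ∧ (ends' e).2 = none))
    (η : ℕ) (hη : 2 ≤ η)
    (hexact : (Nat.card {e : E // (ends' e).1 = none} +
        Nat.card {e : E // (ends' e).2 = none}) * η = dDeg ends y)
    (hevenMoved : Even (Nat.card {e : E // (ends' e).1 = none} +
        Nat.card {e : E // (ends' e).2 = none}))
    (hposMoved : 0 < Nat.card {e : E // (ends' e).1 = none} +
        Nat.card {e : E // (ends' e).2 = none})
    (hhalf : ∀ v : V, v ≠ y →
      2 * Nat.card {e : E // dJoinsComp ends y e v ∧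
          ((ends' e).1 = none ∨ (ends' e).2 = none)} ≤
        Nat.card {e : E // dJoinsComp ends y e v}) :
    ∀ x z : Option V, Relation.ReflTransGen (dAdj ends') x z :=
  detach_vertex_stays_connected_general ends y hconn ends' hproj hone hposMoved hhalf
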